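/- Fix α ∈ (0,1). With X(T) = T^{1/(log log T)^{2−α/2}} and σ₀(T) = 1/2 + 1/(log log T)^{1−α}, the quantity ∏_{p prime, p ≥ X(T)} (1 − p^{-2σ₀(T)})^{-1} · ∏_{p prime, p ≥ X(T)} (1 + 2(p^{2σ₀(T)}+1)/(p^{4σ₀(T)}(p^{2σ₀(T)}−1))) tends to 1 as the real number T tends to infinity. -/

import Mathlib

/-!
Write `s = 2σ₀(T) = 1 + δ`. For a prime `p` both local factors are `1 + O(p^{-s})`, so the product
lies between `1` and `exp (5 ∑_{p ≥ X} p^{-s})`, and the integral test bounds this tail sum by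
`(X/2)^{-δ} / δ`. With `L = log log T` one has `δ = 2 / L^{1-α}` and
`δ log X = 2 log T / L^{3 - 3α/2}`, which exceeds `2L` once `L^{4 - 3α/2} ≤ log T = e^L`;
hence the tail sum is `O(L e^{-L})`, which tends to `0`.
-/

open Filter

/-- `X(T) = T^(1/(log log T)^(2-α/2))`. -/
noncomputable def Xfun (α T : ℝ) : ℝ := T ^ (1 / Real.log (Real.log T) ^ (2 - α / 2))

/-- `σ₀(T) = 1/2 + 1/(log log T)^(1-α)`. -/
noncomputable def sigma0 (α T : ℝ) : ℝ := 1 / 2 + 1 / Real.log (Real.log T) ^ (1 - α)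

open Real Topology

namespace Real

variable {ι : Type*} {f : ι → ℝ}

lemma one_le_tprod (hf : ∀ i, 1 ≤ f i) : 1 ≤ ∏' i, f i := by
  by_cases hm : Multipliable f
  · exact ge_of_tendsto hm.hasProd
      (Eventually.of_forall fun s => Finset.one_le_prod fun i _ => hf i)
  · rw [tprod_eq_one_of_not_multipliable hm]

lemma tprod_le_exp_mul_tsum {w : ι → ℝ} {C : ℝ} (hw : Summable w) (hf : ∀ i, 1 ≤ f i)
    (hfw : ∀ i, f i - 1 ≤ C * w i) : ∏' i, f i ≤ exp (C * ∑' i, w i) := by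
  have hf0 : ∀ i, 0 ≤ f i - 1 := fun i => sub_nonneg.2 (hf i)
  have hsum : Summable fun i => f i - 1 := (hw.mul_left C).of_nonneg_of_le hf0 hfw
  calc ∏' i, f i ≤ exp (∑' i, (f i - 1)) := by
        refine tprod_le_of_prod_le' (one_le_exp (tsum_nonneg hf0)) fun s => ?_
        calc ∏ i ∈ s, f i = ∏ i ∈ s, (1 + (f i - 1)) := by simp
          _ ≤ exp (∑ i ∈ s, (f i - 1)) := prod_one_add_le_exp_sum s hf0
          _ ≤ exp (∑' i, (f i - 1)) := exp_le_exp.2 (hsum.sum_le_tsum s fun i _ => hf0 i)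
    _ ≤ exp (C * ∑' i, w i) := by
      rw [← tsum_mul_left]
      exact exp_le_exp.2 (hsum.tsum_le_tsum hfw (hw.mul_left C))

end Real

lemma inv_one_sub_sub_one_le {x : ℝ} (hx0 : 0 ≤ x) (hx : x ≤ 1 / 2) : (1 - x)⁻¹ - 1 ≤ 2 * x := by
  rw [sub_le_iff_le_add, inv_le_iff_one_le_mul₀ (by linarith)]
  nlinarith

lemma two_mul_add_one_div_sq_mul_sub_one_le {A : ℝ} (hA : 2 ≤ A) :
    2 * (A + 1) / (A ^ 2 * (A - 1)) ≤ 3 * A⁻¹ := by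
  have hA1 : 0 < A - 1 := by linarith
  rw [div_le_iff₀ (by positivity), ← div_eq_mul_inv, div_mul_eq_mul_div,
    le_div_iff₀ (by positivity)]
  nlinarith

lemma two_le_rpow {q s : ℝ} (hq : 2 ≤ q) (hs : 1 ≤ s) : 2 ≤ q ^ s :=
  hq.trans (self_le_rpow_of_one_le (by linarith) hs)

variable {s X : ℝ}

noncomputable def primeTailWeight (X s : ℝ) (p : Nat.Primes) : ℝ :=
  if X ≤ ((p : ℕ) : ℝ) then ((p : ℕ) : ℝ) ^ (-s) else 0

lemma summable_primeTailWeight (hs : 1 < s) : Summable (primeTailWeight X s) :=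
  (Nat.Primes.summable_rpow.2 (by linarith : -s < -1)).of_nonneg_of_le
    (fun p => by unfold primeTailWeight; split_ifs <;> positivity)
    (fun p => by unfold primeTailWeight; split_ifs <;> [exact le_rfl; positivity])

lemma summable_nat_tail_rpow_neg (hs : 1 < s) {N : ℕ} :
    Summable fun n : ℕ => if N < n then (n : ℝ) ^ (-s) else 0 :=
  (summable_nat_rpow.2 (by linarith : -s < -1)).of_nonneg_of_le
    (fun n => by split_ifs <;> positivity) (fun n => by split_ifs <;> [exact le_rfl; positivity])

lemma tsum_nat_tail_rpow_neg_le (hs : 1 < s) {N : ℕ} (hN : 0 < N) :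
    ∑' n : ℕ, (if N < n then (n : ℝ) ^ (-s) else 0) ≤ (N : ℝ) ^ (1 - s) / (s - 1) := by
  rw [← (summable_nat_tail_rpow_neg hs).sum_add_tsum_nat_add (N + 1),
    Finset.sum_eq_zero fun n hn => if_neg (by rw [Finset.mem_range] at hn; omega), zero_add]
  simp only [show ∀ n, N < n + (N + 1) from fun n => by omega, if_true]
  have hN' : (0 : ℝ) < N := by exact_mod_cast hN
  calc ∑' n : ℕ, ((n + (N + 1) : ℕ) : ℝ) ^ (-s)
      ≤ ∫ t in Set.Ioi (N : ℝ), t ^ (-s) :=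
        AntitoneOn.tsum_comp_add_le_integral N
          (fun x hx y _ hxy => rpow_le_rpow_of_nonpos (hN'.trans_le hx) hxy (by linarith))
          (integrableOn_Ioi_rpow_of_lt (by linarith) hN')
          fun t ht => (rpow_pos_of_pos (hN'.trans ht) _).le
    _ = (N : ℝ) ^ (1 - s) / (s - 1) := by
      rw [integral_Ioi_rpow_of_lt (by linarith) hN', neg_div, ← div_neg, neg_add', neg_neg,
        neg_add_eq_sub]

lemma tsum_primeTailWeight_le (hs : 1 < s) (hX : 2 ≤ X) :
    ∑' p, primeTailWeight X s p ≤ (X / 2) ^ (1 - s) / (s - 1) := by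
  set N := ⌈X / 2⌉₊
  have hN : X / 2 ≤ N := Nat.le_ceil _
  have hNX : (N : ℝ) < X := by linarith [Nat.ceil_lt_add_one (by linarith : 0 ≤ X / 2)]
  calc ∑' p, primeTailWeight X s p
      ≤ ∑' n : ℕ, (if N < n then (n : ℝ) ^ (-s) else 0) := by
        refine (summable_primeTailWeight hs).tsum_le_tsum_of_inj _ Nat.Primes.coe_nat_injective
          (fun n _ => by split_ifs <;> positivity) (fun p => ?_) (summable_nat_tail_rpow_neg hs)
        unfold primeTailWeight
        by_cases hp : X ≤ ((p : ℕ) : ℝ)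
        · rw [if_pos hp, if_pos (by exact_mod_cast hNX.trans_le hp)]
        · rw [if_neg hp]
          split_ifs <;> positivity
    _ ≤ (N : ℝ) ^ (1 - s) / (s - 1) := tsum_nat_tail_rpow_neg_le hs (Nat.ceil_pos.2 (by linarith))
    _ ≤ (X / 2) ^ (1 - s) / (s - 1) :=
      div_le_div_of_nonneg_right (rpow_le_rpow_of_nonpos (by linarith) hN (by linarith))
        (by linarith)

variable {σ : ℝ}

noncomputable def tailEulerFactor₁ (X σ : ℝ) (p : Nat.Primes) : ℝ :=
  if X ≤ ((p : ℕ) : ℝ) then (1 - ((p : ℕ) : ℝ) ^ (-(2 * σ)))⁻¹ else 1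

noncomputable def tailEulerFactor₂ (X σ : ℝ) (p : Nat.Primes) : ℝ :=
  if X ≤ ((p : ℕ) : ℝ) then
    1 + 2 * (((p : ℕ) : ℝ) ^ (2 * σ) + 1) /
      (((p : ℕ) : ℝ) ^ (4 * σ) * (((p : ℕ) : ℝ) ^ (2 * σ) - 1))
  else 1

noncomputable def tailEulerProducts (X σ : ℝ) : ℝ :=
  (∏' p, tailEulerFactor₁ X σ p) * ∏' p, tailEulerFactor₂ X σ p

lemma two_le_prime_rpow (p : Nat.Primes) (hσ : 1 < 2 * σ) : 2 ≤ ((p : ℕ) : ℝ) ^ (2 * σ) :=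
  two_le_rpow (by exact_mod_cast p.2.two_le) hσ.le

lemma prime_rpow_neg_le_half (p : Nat.Primes) (hσ : 1 < 2 * σ) :
    ((p : ℕ) : ℝ) ^ (-(2 * σ)) ≤ 1 / 2 := by
  rw [rpow_neg (Nat.cast_nonneg _), one_div]
  exact inv_anti₀ two_pos (two_le_prime_rpow p hσ)

lemma one_le_tailEulerFactor₁ (hσ : 1 < 2 * σ) (p : Nat.Primes) : 1 ≤ tailEulerFactor₁ X σ p := by
  unfold tailEulerFactor₁
  split_ifs
  · have hx := prime_rpow_neg_le_half p hσ
    have hx0 := rpow_nonneg (Nat.cast_nonneg (p : ℕ)) (-(2 * σ))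
    exact (one_le_inv₀ (by linarith)).2 (by linarith)
  · exact le_rfl

lemma tailEulerFactor₁_sub_one_le (hσ : 1 < 2 * σ) (p : Nat.Primes) :
    tailEulerFactor₁ X σ p - 1 ≤ 2 * primeTailWeight X (2 * σ) p := by
  unfold tailEulerFactor₁ primeTailWeight
  split_ifs
  · exact inv_one_sub_sub_one_le (by positivity) (prime_rpow_neg_le_half p hσ)
  · simp

lemma prime_rpow_four_mul (p : Nat.Primes) :
    ((p : ℕ) : ℝ) ^ (4 * σ) = (((p : ℕ) : ℝ) ^ (2 * σ)) ^ 2 := by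
  rw [← rpow_natCast, ← rpow_mul (Nat.cast_nonneg _)]
  ring_nf

lemma one_le_tailEulerFactor₂ (hσ : 1 < 2 * σ) (p : Nat.Primes) : 1 ≤ tailEulerFactor₂ X σ p := by
  unfold tailEulerFactor₂
  split_ifs
  · have := two_le_prime_rpow p hσ
    rw [prime_rpow_four_mul, le_add_iff_nonneg_right]
    exact div_nonneg (by linarith) (mul_nonneg (by positivity) (by linarith))
  · exact le_rfl

lemma tailEulerFactor₂_sub_one_le (hσ : 1 < 2 * σ) (p : Nat.Primes) :
    tailEulerFactor₂ X σ p - 1 ≤ 3 * primeTailWeight X (2 * σ) p := by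
  unfold tailEulerFactor₂ primeTailWeight
  split_ifs
  · rw [add_sub_cancel_left, prime_rpow_four_mul, rpow_neg (Nat.cast_nonneg _)]
    exact two_mul_add_one_div_sq_mul_sub_one_le (two_le_prime_rpow p hσ)
  · simp

lemma one_le_tailEulerProducts (hσ : 1 < 2 * σ) : 1 ≤ tailEulerProducts X σ :=
  one_le_mul_of_one_le_of_one_le (one_le_tprod (one_le_tailEulerFactor₁ hσ))
    (one_le_tprod (one_le_tailEulerFactor₂ hσ))

lemma tailEulerProducts_le_exp (hσ : 1 < 2 * σ) (hX : 2 ≤ X) :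
    tailEulerProducts X σ ≤ exp (5 * ((X / 2) ^ (1 - 2 * σ) / (2 * σ - 1))) := by
  have hw := summable_primeTailWeight (X := X) hσ
  calc tailEulerProducts X σ
      ≤ exp (2 * ∑' p, primeTailWeight X (2 * σ) p) *
          exp (3 * ∑' p, primeTailWeight X (2 * σ) p) :=
        mul_le_mul (tprod_le_exp_mul_tsum hw (one_le_tailEulerFactor₁ hσ)
            (tailEulerFactor₁_sub_one_le hσ))
          (tprod_le_exp_mul_tsum hw (one_le_tailEulerFactor₂ hσ) (tailEulerFactor₂_sub_one_le hσ))
          (zero_le_one.trans (one_le_tprod (one_le_tailEulerFactor₂ hσ))) (exp_pos _).le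
    _ = exp (5 * ∑' p, primeTailWeight X (2 * σ) p) := by rw [← exp_add]; ring_nf
    _ ≤ exp (5 * ((X / 2) ^ (1 - 2 * σ) / (2 * σ - 1))) := by
      gcongr
      exact tsum_primeTailWeight_le hσ hX

lemma half_rpow_neg_div_le {X δ L : ℝ} (hX : 0 < X) (hδ : 0 < δ) (hδ2 : δ ≤ 2) (hδL : 1 ≤ δ * L)
    (hXL : L ≤ δ * log X) : (X / 2) ^ (-δ) / δ ≤ 4 * (L * exp (-L)) := by
  have hX' : X ^ (-δ) ≤ exp (-L) := by
    rw [rpow_def_of_pos hX]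
    exact exp_le_exp.2 (by linarith)
  have h2 : (2 : ℝ) ^ δ ≤ 4 := by
    calc (2 : ℝ) ^ δ ≤ 2 ^ (2 : ℝ) := rpow_le_rpow_of_exponent_le one_le_two hδ2
      _ = 4 := by norm_num
  have hinv : δ⁻¹ ≤ L := by
    rw [inv_le_iff_one_le_mul₀ hδ, mul_comm]; exact hδL
  rw [div_rpow hX.le zero_le_two, rpow_neg zero_le_two, div_inv_eq_mul, div_eq_mul_inv]
  calc X ^ (-δ) * 2 ^ δ * δ⁻¹ ≤ exp (-L) * 4 * L := by gcongr
    _ = 4 * (L * exp (-L)) := by ring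

lemma two_mul_sigma0_sub_one (α T : ℝ) :
    2 * sigma0 α T - 1 = 2 / log (log T) ^ (1 - α) := by
  unfold sigma0; ring

lemma log_Xfun (α : ℝ) {T : ℝ} (hT : 0 < T) :
    log (Xfun α T) = log T / log (log T) ^ (2 - α / 2) := by
  rw [Xfun, log_rpow hT]; ring

lemma sigma0_Xfun_bounds {α T : ℝ} (hα : 0 ≤ α) (hα' : α ≤ 1) (hT : 0 < T) (hL : 1 ≤ log (log T))
    (hlog : log (log T) ^ (4 - 3 * α / 2) ≤ log T) :
    1 < 2 * sigma0 α T ∧ 2 ≤ Xfun α T ∧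
      (Xfun α T / 2) ^ (1 - 2 * sigma0 α T) / (2 * sigma0 α T - 1)
        ≤ 4 * (log (log T) * exp (-log (log T))) := by
  set L := log (log T)
  set δ := 2 * sigma0 α T - 1
  have hL0 : 0 < L := by linarith
  have hLα : 1 ≤ L ^ (1 - α) := one_le_rpow hL (by linarith)
  have hLαL : L ^ (1 - α) ≤ L := by
    simpa using rpow_le_rpow_of_exponent_le hL (by linarith : 1 - α ≤ 1)
  have hδ : δ = 2 / L ^ (1 - α) := two_mul_sigma0_sub_one α T
  have hδ0 : 0 < δ := by rw [hδ]; positivity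
  have hδ2 : δ ≤ 2 := by rw [hδ]; exact div_le_self zero_le_two hLα
  have hδL : 1 ≤ δ * L := by
    rw [hδ, div_mul_eq_mul_div, le_div_iff₀ (by positivity)]; linarith
  have hsplit : L ^ (4 - 3 * α / 2) = L * (L ^ (1 - α) * L ^ (2 - α / 2)) := by
    rw [show 4 - 3 * α / 2 = 1 + ((1 - α) + (2 - α / 2)) by ring, rpow_add hL0, rpow_add hL0,
      rpow_one]
  have hXL : 2 * L ≤ δ * log (Xfun α T) := by
    rw [log_Xfun α hT, hδ, div_mul_div_comm, le_div_iff₀ (by positivity)]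
    nlinarith
  have hX : 2 ≤ Xfun α T := by
    calc (2 : ℝ) ≤ log (Xfun α T) + 1 := by nlinarith
      _ ≤ Xfun α T := (add_one_le_exp _).trans_eq (exp_log (rpow_pos_of_pos hT _))
  refine ⟨by linarith, hX, ?_⟩
  rw [show 1 - 2 * sigma0 α T = -δ by ring]
  exact half_rpow_neg_div_le (by linarith) hδ0 hδ2 hδL (by linarith)

lemma eventually_log_log_rpow_le_log (k : ℝ) :
    ∀ᶠ T in atTop, 0 < T ∧ 1 ≤ log (log T) ∧ log (log T) ^ k ≤ log T := by
  have hL : Tendsto (fun T => log (log T)) atTop atTop := tendsto_log_atTop.comp tendsto_log_atTop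
  filter_upwards [eventually_gt_atTop 0, hL.eventually_ge_atTop 1,
    hL.eventually ((tendsto_exp_div_rpow_atTop k).eventually_ge_atTop 1),
    tendsto_log_atTop.eventually_gt_atTop 0] with T hT hL1 hk hlogT
  refine ⟨hT, hL1, ?_⟩
  rwa [le_div_iff₀ (by positivity), one_mul, exp_log hlogT] at hk

theorem tail_euler_products_tendsto_one (α : ℝ) (hα : 0 < α) (hα' : α < 1) :
    Tendsto (fun T : ℝ =>
        (∏' p : Nat.Primes, if Xfun α T ≤ ((p : ℕ) : ℝ) then
            (1 - ((p : ℕ) : ℝ) ^ (-(2 * sigma0 α T)))⁻¹ else 1) *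
        (∏' p : Nat.Primes, if Xfun α T ≤ ((p : ℕ) : ℝ) then
            (1 + 2 * (((p : ℕ) : ℝ) ^ (2 * sigma0 α T) + 1) /
              (((p : ℕ) : ℝ) ^ (4 * sigma0 α T) * (((p : ℕ) : ℝ) ^ (2 * sigma0 α T) - 1)))
          else 1))
      atTop (nhds 1) := by
  change Tendsto (fun T => tailEulerProducts (Xfun α T) (sigma0 α T)) atTop (𝓝 1)
  have hL : Tendsto (fun T => log (log T)) atTop atTop := tendsto_log_atTop.comp tendsto_log_atTop
  have hupper : Tendsto (fun T => exp (5 * (4 * (log (log T) * exp (-log (log T))))))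
      atTop (𝓝 1) := by
    simpa using
      ((((tendsto_pow_mul_exp_neg_atTop_nhds_zero 1).comp hL).const_mul 4).const_mul 5).rexp
  have hbounds := (eventually_log_log_rpow_le_log (4 - 3 * α / 2)).mono fun T ⟨hT, hL1, hlog⟩ =>
    sigma0_Xfun_bounds hα.le hα'.le hT hL1 hlog
  refine tendsto_of_tendsto_of_tendsto_of_le_of_le' tendsto_const_nhds hupper ?_ ?_
  · exact hbounds.mono fun T ⟨hσ, _, _⟩ => one_le_tailEulerProducts hσ
  · exact hbounds.mono fun T ⟨hσ, hX, hB⟩ =>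
      (tailEulerProducts_le_exp hσ hX).trans (exp_le_exp.2 (by linarith))
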